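/- arXiv:1303.0761 — 2 statements merged into one kernel-verified Lean document; each statement's English description precedes it below -/
import Mathlib

section
/- Core positivity step in the proof of the Wells inequality. Let V be a nonempty finite set, let J : V × V → ℝ be symmetric with J(y,z) ≥ 0 and J(y,y) = 0 for all y,z ∈ V, and let K : V → ℝ satisfy K(y) ≥ 0 for all y ∈ V. Let χ be a finite symmetric Borel measure on ℝ such that ∫ exp(ϑ t²) χ(dt) < ∞ for every ϑ > 0, and let a > 0 satisfy the Wells condition χ([a√2, ∞)) ≥ χ([0, a]). Then for every x ∈ V, ∫_{ℝ^V} ∫_{ℝ^V} (σ_x − a τ_x) · exp( (1/2) Σ_{y,z ∈ V} J(y,z)(σ_y σ_z + a² τ_y τ_z) + Σ_{y ∈ V} K(y)(σ_y + a τ_y) ) μ_I^{⊗V}(dτ) χ^{⊗V}(dσ) ≥ 0. -/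
open MeasureTheory Asymptotics Filter Finset MvPolynomial
open scoped ENNReal Nat Topology

/-!
Substitute `u = σ + a τ` and `v = σ - a τ` site by site. Then
`σ_y σ_z + a² τ_y τ_z = (u_y u_z + v_y v_z) / 2` and `σ_y + a τ_y = u_y`, so the exponent is a
polynomial in `(u, v)` with nonnegative coefficients and `σ_x - a τ_x = v_x`. Truncating the
exponential series (dominated convergence applies since everything grows at most like the
exponential of a quadratic, which `χ` integrates), it suffices that every monomial in `(u, v)` has
nonnegative integral. A monomial factorises over the sites, and averaging over `τ = ±1` turns a
one-site factor into half of `∫ ((s + a)^m (s - a)^n + (s + a)^n (s - a)^m) dχ`.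

By the symmetry of `χ` this vanishes when `m + n` is odd. When `m = n + 2p` the integrand is
`(s² - a²)^n ((s + a)^(2p) + (s - a)^(2p))`: it is nonnegative for `|s| ≥ a`, at least some
`c ≥ 0` for `|s| ≥ a√2` and at least `-c` on `[-a, a]`. Symmetry and the Wells condition give
`χ [-a, a] ≤ 2 χ [0, a] ≤ 2 χ [a√2, ∞) = χ {|s| ≥ a√2}`, so the integral is nonnegative.
-/

namespace Wells

noncomputable section

def isingMeasure : Measure ℝ := (2 : ℝ≥0∞)⁻¹ • (Measure.dirac (-1) + Measure.dirac 1)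

instance : IsProbabilityMeasure isingMeasure := by
  constructor
  simp [isingMeasure, ENNReal.inv_two_add_inv_two]

lemma integrable_isingMeasure (f : ℝ → ℝ) : Integrable f isingMeasure :=
  ((integrable_dirac enorm_lt_top).add_measure (integrable_dirac enorm_lt_top)).smul_measure
    (by simp)

lemma integral_isingMeasure (f : ℝ → ℝ) : ∫ t, f t ∂isingMeasure = (f (-1) + f 1) / 2 := by
  rw [isingMeasure, integral_smul_measure, integral_add_measure (integrable_dirac enorm_lt_top)
    (integrable_dirac enorm_lt_top), integral_dirac, integral_dirac]
  simp [ENNReal.toReal_inv, div_eq_inv_mul]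

lemma integral_nonneg_of_compensated {α : Type*} [MeasurableSpace α] {μ : Measure α}
    [IsFiniteMeasure μ] {f : α → ℝ} {S T : Set α} (hS : MeasurableSet S) (hT : MeasurableSet T)
    (hμ : μ T ≤ μ S) {c : ℝ} (hc : 0 ≤ c) (hfS : ∀ x ∈ S, c ≤ f x) (hfT : ∀ x ∈ T, -c ≤ f x)
    (hf : ∀ x ∉ T, 0 ≤ f x) : 0 ≤ ∫ x, f x ∂μ := by
  by_cases hfi : Integrable f μ
  swap
  · rw [integral_undef hfi]
  have hS_int := (integrable_const (μ := μ) c).indicator hS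
  have hT_int := (integrable_const (μ := μ) c).indicator hT
  have hle : S.indicator (fun _ => c) - T.indicator (fun _ => c) ≤ f := fun x => by
    by_cases hxT : x ∈ T
    · by_cases hxS : x ∈ S
      · simpa [hxS, hxT] using hc.trans (hfS x hxS)
      · simpa [hxS, hxT] using hfT x hxT
    · by_cases hxS : x ∈ S
      · simpa [hxS, hxT] using hfS x hxS
      · simpa [hxS, hxT] using hf x hxT
  have hmono := integral_mono (hS_int.sub hT_int) hfi hle
  rw [integral_sub' hS_int hT_int, integral_indicator_const _ hS,
    integral_indicator_const _ hT] at hmono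
  have : μ.real T ≤ μ.real S := ENNReal.toReal_mono (measure_ne_top μ S) hμ
  simp only [smul_eq_mul] at hmono
  nlinarith

section SingleSite

variable {χ : Measure ℝ} {a : ℝ}

lemma measure_abs_le_le_measure_le_abs [χ.IsNegInvariant] {b : ℝ} (hb : 0 < b)
    (hWells : χ (Set.Icc 0 a) ≤ χ (Set.Ici b)) : χ {t | |t| ≤ a} ≤ χ {t | b ≤ |t|} := by
  have hT : {t : ℝ | |t| ≤ a} ⊆ Set.Icc 0 a ∪ -Set.Icc 0 a := by
    intro t ht
    rcases le_total 0 t with h | h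
    · exact Or.inl ⟨h, by simpa [abs_of_nonneg h] using ht⟩
    · exact Or.inr ⟨by linarith, by simpa [abs_of_nonpos h] using ht⟩
  have hS : {t : ℝ | b ≤ |t|} = Set.Ici b ∪ -Set.Ici b := by
    ext t
    simp only [Set.mem_union, Set.mem_Ici, Set.mem_neg, le_abs']
    constructor <;> rintro (h | h) <;> first | (left; linarith) | (right; linarith)
  have hdisj : Disjoint (Set.Ici b) (-Set.Ici b) := by
    rw [Set.disjoint_left]
    intro t h1 h2
    simp only [Set.mem_Ici, Set.mem_neg] at h1 h2
    linarith
  calc χ {t | |t| ≤ a} ≤ χ (Set.Icc 0 a ∪ -Set.Icc 0 a) := measure_mono hT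
    _ ≤ χ (Set.Icc 0 a) + χ (-Set.Icc 0 a) := measure_union_le _ _
    _ = χ (Set.Icc 0 a) + χ (Set.Icc 0 a) := by rw [Measure.measure_neg]
    _ ≤ χ (Set.Ici b) + χ (Set.Ici b) := add_le_add hWells hWells
    _ = χ (Set.Ici b) + χ (-Set.Ici b) := by rw [Measure.measure_neg]
    _ = χ {t | b ≤ |t|} := by rw [hS, measure_union hdisj measurableSet_Ici.neg]

def wellsFactor (a : ℝ) (n p : ℕ) (s : ℝ) : ℝ :=
  (s ^ 2 - a ^ 2) ^ n * ((s + a) ^ (2 * p) + (s - a) ^ (2 * p))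

lemma wellsFactor_abs (n p : ℕ) (s : ℝ) : wellsFactor a n p |s| = wellsFactor a n p s := by
  rcases abs_choice s with h | h <;> rw [h]
  rw [wellsFactor, wellsFactor, show -s + a = -(s - a) by ring, show -s - a = -(s + a) by ring,
    Even.neg_pow (even_two_mul p), Even.neg_pow (even_two_mul p), neg_sq, add_comm (_ ^ _)]

lemma pow_add_pow_le_add_pow_add_zero_pow {x y : ℝ} (hx : 0 ≤ x) (hy : 0 ≤ y) (k : ℕ) :
    x ^ k + y ^ k ≤ (x + y) ^ k + 0 ^ k := by
  rcases eq_or_ne k 0 with rfl | hk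
  · simp
  · simpa [zero_pow hk] using pow_add_pow_le hx hy hk

lemma wellsFactor_nonneg (n p : ℕ) {s : ℝ} (hs : a ^ 2 ≤ s ^ 2) : 0 ≤ wellsFactor a n p s :=
  mul_nonneg (pow_nonneg (sub_nonneg.2 hs) n)
    (add_nonneg (Even.pow_nonneg (even_two_mul p) _) (Even.pow_nonneg (even_two_mul p) _))

/- The threshold is `a²ⁿ` times the second factor of `wellsFactor` at `u = a`; this uses
`0 ^ 0 = 1` when `p = 0`. -/
lemma abs_wellsFactor_le (n p : ℕ) {u : ℝ} (hu : 0 ≤ u) (hua : u ≤ a) :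
    |wellsFactor a n p u| ≤ (a ^ 2) ^ n * ((2 * a) ^ (2 * p) + 0 ^ (2 * p)) := by
  have hsq : |u ^ 2 - a ^ 2| ≤ a ^ 2 := by
    rw [abs_le]; constructor <;> nlinarith
  have hsum : (u + a) ^ (2 * p) + (u - a) ^ (2 * p) ≤ (2 * a) ^ (2 * p) + 0 ^ (2 * p) := by
    rw [← Even.neg_pow (even_two_mul p) (u - a), neg_sub, show 2 * a = (u + a) + (a - u) by ring]
    exact pow_add_pow_le_add_pow_add_zero_pow (by linarith) (by linarith) _
  have hpos : 0 ≤ (u + a) ^ (2 * p) + (u - a) ^ (2 * p) :=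
    add_nonneg (Even.pow_nonneg (even_two_mul p) _) (Even.pow_nonneg (even_two_mul p) _)
  rw [wellsFactor, abs_mul, abs_pow, abs_of_nonneg hpos]
  exact mul_le_mul (pow_le_pow_left₀ (abs_nonneg _) hsq n) hsum hpos (by positivity)

lemma le_wellsFactor (ha : 0 ≤ a) (n p : ℕ) {u : ℝ} (hu : a * Real.sqrt 2 ≤ u) :
    (a ^ 2) ^ n * ((2 * a) ^ (2 * p) + 0 ^ (2 * p)) ≤ wellsFactor a n p u := by
  have hsqrt := Real.one_le_sqrt.2 one_le_two
  have hau : a ≤ u := le_trans (le_mul_of_one_le_right ha hsqrt) hu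
  have hsq : 2 * a ^ 2 ≤ u ^ 2 := by
    have := pow_le_pow_left₀ (by positivity) hu 2
    rwa [mul_pow, Real.sq_sqrt zero_le_two, mul_comm] at this
  exact mul_le_mul (pow_le_pow_left₀ (sq_nonneg a) (by linarith) n)
    (add_le_add (pow_le_pow_left₀ (by linarith) (by linarith) _)
      (pow_le_pow_left₀ le_rfl (by linarith) _))
    (by positivity) (pow_nonneg (by linarith [sq_nonneg a]) n)

lemma integral_wellsFactor_nonneg [IsFiniteMeasure χ] [χ.IsNegInvariant] (ha : 0 < a)
    (hWells : χ (Set.Icc 0 a) ≤ χ (Set.Ici (a * Real.sqrt 2))) (n p : ℕ) :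
    0 ≤ ∫ s, wellsFactor a n p s ∂χ :=
  integral_nonneg_of_compensated (measurableSet_le measurable_const continuous_abs.measurable)
    (measurableSet_le continuous_abs.measurable measurable_const)
    (measure_abs_le_le_measure_le_abs (by positivity) hWells) (by positivity)
    (fun s hs => wellsFactor_abs (a := a) n p s ▸ le_wellsFactor ha.le n p hs)
    (fun s hs => wellsFactor_abs (a := a) n p s ▸
      neg_le_of_abs_le (abs_wellsFactor_le n p (abs_nonneg s) hs))
    (fun s hs => wellsFactor_nonneg n p
      (sq_le_sq.2 ((abs_of_pos ha).trans_le (le_of_not_ge (show ¬|s| ≤ a from hs)))))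

lemma neg_add_pow_mul_neg_sub_pow_add_swap (a s : ℝ) (m n : ℕ) :
    (-s + a) ^ m * (-s - a) ^ n + (-s + a) ^ n * (-s - a) ^ m
      = (-1) ^ (m + n) * ((s + a) ^ m * (s - a) ^ n + (s + a) ^ n * (s - a) ^ m) := by
  rw [show -s + a = -(s - a) by ring, show -s - a = -(s + a) by ring]
  simp only [neg_pow (s - a), neg_pow (s + a), pow_add]
  ring

lemma integral_pow_mul_pow_add_swap_nonneg [IsFiniteMeasure χ] [χ.IsNegInvariant] (ha : 0 < a)
    (hWells : χ (Set.Icc 0 a) ≤ χ (Set.Ici (a * Real.sqrt 2))) (m n : ℕ) :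
    0 ≤ ∫ s, ((s + a) ^ m * (s - a) ^ n + (s + a) ^ n * (s - a) ^ m) ∂χ := by
  wlog hnm : n ≤ m generalizing m n
  · simpa only [add_comm] using this n m (le_of_not_ge hnm)
  obtain ⟨k, rfl⟩ := Nat.exists_eq_add_of_le hnm
  rcases Nat.even_or_odd' k with ⟨p, rfl | rfl⟩
  · convert integral_wellsFactor_nonneg ha hWells n p using 3 with s
    rw [wellsFactor, show s ^ 2 - a ^ 2 = (s + a) * (s - a) by ring, mul_pow, pow_add, pow_add]
    ring
  · have hsymm := integral_neg_eq_self (fun s => (s + a) ^ (n + (2 * p + 1)) * (s - a) ^ n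
      + (s + a) ^ n * (s - a) ^ (n + (2 * p + 1))) χ
    simp only [neg_add_pow_mul_neg_sub_pow_add_swap,
      Odd.neg_one_pow (⟨n + p, by ring⟩ : Odd (n + (2 * p + 1) + n)), neg_one_mul,
      integral_neg] at hsymm
    linarith

lemma integral_integral_isingMeasure_nonneg [IsFiniteMeasure χ] [χ.IsNegInvariant] (ha : 0 < a)
    (hWells : χ (Set.Icc 0 a) ≤ χ (Set.Ici (a * Real.sqrt 2))) (m n : ℕ) :
    0 ≤ ∫ s, ∫ t, (s + a * t) ^ m * (s - a * t) ^ n ∂isingMeasure ∂χ := by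
  have hinner : ∀ s, ∫ t, (s + a * t) ^ m * (s - a * t) ^ n ∂isingMeasure
      = ((s + a) ^ m * (s - a) ^ n + (s + a) ^ n * (s - a) ^ m) / 2 := fun s => by
    rw [integral_isingMeasure]
    ring
  simp_rw [hinner]
  rw [integral_div]
  exact div_nonneg (integral_pow_mul_pow_add_swap_nonneg ha hWells m n) zero_le_two

end SingleSite

section Growth

variable {V : Type*} [Fintype V]

def quadWeight (p : (V → ℝ) × (V → ℝ)) : ℝ := 1 + ∑ y, p.1 y ^ 2 + ∑ y, p.2 y ^ 2

lemma one_add_sum_sq_fst_le_quadWeight (p : (V → ℝ) × (V → ℝ)) :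
    1 + ∑ y, p.1 y ^ 2 ≤ quadWeight p :=
  le_add_of_nonneg_right (by positivity)

lemma one_add_sum_sq_snd_le_quadWeight (p : (V → ℝ) × (V → ℝ)) :
    1 + ∑ y, p.2 y ^ 2 ≤ quadWeight p := by
  rw [quadWeight, add_right_comm]
  exact le_add_of_nonneg_right (by positivity)

lemma one_le_quadWeight (p : (V → ℝ) × (V → ℝ)) : 1 ≤ quadWeight p :=
  (le_add_of_nonneg_right (by positivity)).trans (one_add_sum_sq_fst_le_quadWeight p)

lemma isBigO_quadWeight_of_abs_le {f : (V → ℝ) × (V → ℝ) → ℝ}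
    (h : ∀ p, |f p| ≤ quadWeight p) : f =O[⊤] quadWeight :=
  isBigO_of_le _ fun p => by
    rw [Real.norm_eq_abs, Real.norm_of_nonneg (zero_le_one.trans (one_le_quadWeight p))]
    exact h p

lemma abs_apply_le_one_add_sum_sq (f : V → ℝ) (y : V) : |f y| ≤ 1 + ∑ z, f z ^ 2 := by
  have := single_le_sum (fun z _ => sq_nonneg (f z)) (mem_univ y)
  nlinarith [sq_abs (f y), sq_nonneg (|f y| - 1)]

lemma abs_apply_mul_apply_le_sum_sq (f : V → ℝ) (y z : V) : |f y * f z| ≤ ∑ w, f w ^ 2 := by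
  have hy := single_le_sum (fun w _ => sq_nonneg (f w)) (mem_univ y)
  have hz := single_le_sum (fun w _ => sq_nonneg (f w)) (mem_univ z)
  rw [abs_mul]
  nlinarith [sq_abs (f y), sq_abs (f z), sq_nonneg (|f y| - |f z|)]

lemma isBigO_fst_apply (y : V) : (fun p : (V → ℝ) × (V → ℝ) => p.1 y) =O[⊤] quadWeight :=
  isBigO_quadWeight_of_abs_le fun p =>
    (abs_apply_le_one_add_sum_sq p.1 y).trans (one_add_sum_sq_fst_le_quadWeight p)

lemma isBigO_snd_apply (y : V) : (fun p : (V → ℝ) × (V → ℝ) => p.2 y) =O[⊤] quadWeight :=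
  isBigO_quadWeight_of_abs_le fun p =>
    (abs_apply_le_one_add_sum_sq p.2 y).trans (one_add_sum_sq_snd_le_quadWeight p)

lemma isBigO_fst_mul_fst (y z : V) :
    (fun p : (V → ℝ) × (V → ℝ) => p.1 y * p.1 z) =O[⊤] quadWeight :=
  isBigO_quadWeight_of_abs_le fun p => (abs_apply_mul_apply_le_sum_sq p.1 y z).trans
    ((le_add_of_nonneg_left zero_le_one).trans (one_add_sum_sq_fst_le_quadWeight p))

lemma isBigO_snd_mul_snd (y z : V) :
    (fun p : (V → ℝ) × (V → ℝ) => p.2 y * p.2 z) =O[⊤] quadWeight :=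
  isBigO_quadWeight_of_abs_le fun p => (abs_apply_mul_apply_le_sum_sq p.2 y z).trans
    ((le_add_of_nonneg_left zero_le_one).trans (one_add_sum_sq_snd_le_quadWeight p))

def IntegrableExpSq (χ : Measure ℝ) : Prop :=
  ∀ ϑ : ℝ, 0 < ϑ → Integrable (fun t => Real.exp (ϑ * t ^ 2)) χ

lemma integrableExpSq_isingMeasure : IntegrableExpSq isingMeasure :=
  fun _ _ => integrable_isingMeasure _

variable {χ ν : Measure ℝ} [SigmaFinite χ] [SigmaFinite ν]

lemma integrable_exp_mul_quadWeight (hχ : IntegrableExpSq χ) (hν : IntegrableExpSq ν) {c : ℝ}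
    (hc : 0 < c) : Integrable (fun p => Real.exp (c * quadWeight p))
      ((Measure.pi fun _ : V => χ).prod (Measure.pi fun _ : V => ν)) := by
  have hsplit : (fun p : (V → ℝ) × (V → ℝ) => Real.exp (c * quadWeight p)) = fun p =>
      Real.exp c * ((∏ y, Real.exp (c * p.1 y ^ 2)) * ∏ y, Real.exp (c * p.2 y ^ 2)) := by
    ext p
    simp only [quadWeight, mul_add, mul_one, mul_sum, Real.exp_add, Real.exp_sum, mul_assoc]
  rw [hsplit]
  exact ((Integrable.fintype_prod fun _ => hχ c hc).mul_prod
    (Integrable.fintype_prod fun _ => hν c hc)).const_mul _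

lemma integrable_of_abs_le_exp_of_isBigO (hχ : IntegrableExpSq χ) (hν : IntegrableExpSq ν)
    {f g : (V → ℝ) × (V → ℝ) → ℝ}
    (hf : AEStronglyMeasurable f ((Measure.pi fun _ : V => χ).prod (Measure.pi fun _ : V => ν)))
    (hg : g =O[⊤] quadWeight) (hfg : ∀ p, |f p| ≤ Real.exp (g p)) :
    Integrable f ((Measure.pi fun _ : V => χ).prod (Measure.pi fun _ : V => ν)) := by
  obtain ⟨c, hc, hgc⟩ := hg.exists_pos
  refine (integrable_exp_mul_quadWeight hχ hν hc).mono' hf (ae_of_all _ fun p => ?_)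
  have hp := eventually_top.1 hgc.bound p
  rw [Real.norm_eq_abs, Real.norm_of_nonneg (zero_le_one.trans (one_le_quadWeight p))] at hp
  exact (hfg p).trans (Real.exp_le_exp.2 ((le_abs_self _).trans hp))

end Growth

section Coordinates

variable {V : Type*}

def plusMinusCoords (a : ℝ) (p : (V → ℝ) × (V → ℝ)) : V ⊕ V → ℝ :=
  Sum.elim (fun y => p.1 y + a * p.2 y) (fun y => p.1 y - a * p.2 y)

lemma continuous_plusMinusCoords (a : ℝ) : Continuous (plusMinusCoords (V := V) a) :=
  continuous_pi fun i => by
    cases i <;> simp only [plusMinusCoords, Sum.elim_inl, Sum.elim_inr] <;> fun_prop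

lemma continuous_plusMinusCoords_apply (a : ℝ) (i : V ⊕ V) :
    Continuous fun p => plusMinusCoords (V := V) a p i :=
  (continuous_apply i).comp (continuous_plusMinusCoords a)

variable [Fintype V]

def energy (J : V → V → ℝ) (K : V → ℝ) (a : ℝ) (σ τ : V → ℝ) : ℝ :=
  (1 / 2) * ∑ y, ∑ z, J y z * (σ y * σ z + a ^ 2 * τ y * τ z) + ∑ y, K y * (σ y + a * τ y)

lemma continuous_energy (J : V → V → ℝ) (K : V → ℝ) (a : ℝ) :
    Continuous fun p : (V → ℝ) × (V → ℝ) => energy J K a p.1 p.2 := by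
  simp only [energy]
  fun_prop

lemma isBigO_plusMinusCoords (a : ℝ) (i : V ⊕ V) :
    (fun p => plusMinusCoords a p i) =O[⊤] quadWeight := by
  cases i with
  | inl y => exact (isBigO_fst_apply y).add ((isBigO_snd_apply y).const_mul_left a)
  | inr y => exact (isBigO_fst_apply y).sub ((isBigO_snd_apply y).const_mul_left a)

lemma isBigO_energy (J : V → V → ℝ) (K : V → ℝ) (a : ℝ) :
    (fun p : (V → ℝ) × (V → ℝ) => energy J K a p.1 p.2) =O[⊤] quadWeight := by
  simp only [energy, mul_assoc (a ^ 2)]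
  exact (IsBigO.const_mul_left (IsBigO.fun_sum fun y _ => IsBigO.fun_sum fun z _ =>
      ((isBigO_fst_mul_fst y z).add ((isBigO_snd_mul_snd y z).const_mul_left _)).const_mul_left _)
      _).add
    (IsBigO.fun_sum fun y _ => ((isBigO_fst_apply y).add
      ((isBigO_snd_apply y).const_mul_left a)).const_mul_left _)

end Coordinates

section Polynomials

def nonnegCoeffs (ι : Type*) : Subsemiring (MvPolynomial ι ℝ) where
  carrier := {P | ∀ d, 0 ≤ P.coeff d}
  zero_mem' d := by simp
  one_mem' d := by classical rw [coeff_one]; split_ifs <;> norm_num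
  add_mem' hP hQ d := by rw [coeff_add]; exact add_nonneg (hP d) (hQ d)
  mul_mem' hP hQ d := by
    classical
    rw [coeff_mul]
    exact sum_nonneg fun x _ => mul_nonneg (hP _) (hQ _)

variable {ι : Type*}

lemma C_mem_nonnegCoeffs {c : ℝ} (hc : 0 ≤ c) : C c ∈ nonnegCoeffs ι := fun d => by
  classical
  rw [coeff_C]
  split_ifs
  exacts [hc, le_rfl]

lemma X_mem_nonnegCoeffs (i : ι) : X i ∈ nonnegCoeffs ι := fun d => by
  classical
  rw [coeff_X]
  split_ifs <;> norm_num

def expTrunc (N : ℕ) (P : MvPolynomial ι ℝ) : MvPolynomial ι ℝ :=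
  ∑ k ∈ range N, C (k ! : ℝ)⁻¹ * P ^ k

lemma expTrunc_mem {P : MvPolynomial ι ℝ} (hP : P ∈ nonnegCoeffs ι) (N : ℕ) :
    expTrunc N P ∈ nonnegCoeffs ι :=
  sum_mem fun k _ => mul_mem (C_mem_nonnegCoeffs (by positivity)) (pow_mem hP k)

lemma eval_expTrunc (x : ι → ℝ) (N : ℕ) (P : MvPolynomial ι ℝ) :
    eval x (expTrunc N P) = ∑ k ∈ range N, eval x P ^ k / k ! := by
  simp only [expTrunc, map_sum, map_mul, map_pow, eval_C, div_eq_inv_mul]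

end Polynomials

lemma abs_pow_le_exp_mul_abs (x : ℝ) (n : ℕ) : |x| ^ n ≤ Real.exp (n * |x|) := by
  rw [Real.exp_nat_mul]
  exact pow_le_pow_left₀ (abs_nonneg x) ((le_add_of_nonneg_right zero_le_one).trans
    (Real.add_one_le_exp _)) n

lemma abs_mul_le_exp_abs_add_abs {v w q : ℝ} (hw : |w| ≤ Real.exp |q|) :
    |v * w| ≤ Real.exp (|v| + |q|) := by
  rw [abs_mul, Real.exp_add]
  exact mul_le_mul ((le_add_of_nonneg_right zero_le_one).trans (Real.add_one_le_exp _)) hw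
    (abs_nonneg w) (Real.exp_pos _).le

lemma abs_sum_range_pow_div_factorial_le (q : ℝ) (N : ℕ) :
    |∑ k ∈ range N, q ^ k / k !| ≤ Real.exp |q| :=
  (abs_sum_le_sum_abs _ _).trans_eq (by simp only [abs_div, abs_pow, Nat.abs_cast]) |>.trans
    (Real.sum_le_exp_of_nonneg (abs_nonneg q) N)

lemma tendsto_sum_range_pow_div_factorial (q : ℝ) :
    Tendsto (fun N => ∑ k ∈ range N, q ^ k / k !) atTop (𝓝 (Real.exp q)) := by
  rw [Real.exp_eq_exp_ℝ]
  exact (NormedSpace.expSeries_div_hasSum_exp q).tendsto_sum_nat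

section Monomials

variable {V : Type*} [Fintype V] {χ : Measure ℝ} [IsFiniteMeasure χ] {a : ℝ}

def wellsPoly (J : V → V → ℝ) (K : V → ℝ) : MvPolynomial (V ⊕ V) ℝ :=
  ∑ y, ∑ z, C (J y z / 4) * (X (.inl y) * X (.inl z) + X (.inr y) * X (.inr z))
    + ∑ y, C (K y) * X (.inl y)

lemma wellsPoly_mem {J : V → V → ℝ} {K : V → ℝ} (hJ : ∀ y z, 0 ≤ J y z) (hK : ∀ y, 0 ≤ K y) :
    wellsPoly J K ∈ nonnegCoeffs (V ⊕ V) :=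
  add_mem (sum_mem fun y _ => sum_mem fun z _ => mul_mem (C_mem_nonnegCoeffs (by linarith [hJ y z]))
      (add_mem (mul_mem (X_mem_nonnegCoeffs _) (X_mem_nonnegCoeffs _))
        (mul_mem (X_mem_nonnegCoeffs _) (X_mem_nonnegCoeffs _))))
    (sum_mem fun y _ => mul_mem (C_mem_nonnegCoeffs (hK y)) (X_mem_nonnegCoeffs _))

lemma eval_wellsPoly (J : V → V → ℝ) (K : V → ℝ) (a : ℝ) (p : (V → ℝ) × (V → ℝ)) :
    eval (plusMinusCoords a p) (wellsPoly J K) = energy J K a p.1 p.2 := by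
  simp only [wellsPoly, energy, map_add, map_sum, map_mul, eval_C, eval_X, plusMinusCoords,
    Sum.elim_inl, Sum.elim_inr, mul_sum]
  congr 1
  refine sum_congr rfl fun y _ => sum_congr rfl fun z _ => ?_
  ring

lemma integral_prod_pi_prod {ι X Y : Type*} [Fintype ι] [MeasurableSpace X] [MeasurableSpace Y]
    {μ : Measure X} {ν : Measure Y} [SigmaFinite μ] [SigmaFinite ν] (f : ι → X → Y → ℝ)
    (hf : Integrable (fun p : (ι → X) × (ι → Y) => ∏ i, f i (p.1 i) (p.2 i))
      ((Measure.pi fun _ => μ).prod (Measure.pi fun _ => ν))) :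
    ∫ p, ∏ i, f i (p.1 i) (p.2 i) ∂(Measure.pi fun _ => μ).prod (Measure.pi fun _ => ν)
      = ∏ i, ∫ s, ∫ t, f i s t ∂ν ∂μ := by
  have hinner : ∀ σ : ι → X, ∫ τ, ∏ i, f i (σ i) (τ i) ∂(Measure.pi fun _ => ν)
      = ∏ i, ∫ t, f i (σ i) t ∂ν := fun σ => integral_fintype_prod_eq_prod (fun i t => f i (σ i) t)
  rw [integral_prod _ hf]
  simp only [hinner]
  exact integral_fintype_prod_eq_prod (fun i s => ∫ t, f i s t ∂ν)

lemma integrable_monomial (hχ : IntegrableExpSq χ) (d : V ⊕ V →₀ ℕ) :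
    Integrable (fun p => ∏ i, plusMinusCoords a p i ^ d i)
      ((Measure.pi fun _ : V => χ).prod (Measure.pi fun _ : V => isingMeasure)) := by
  refine integrable_of_abs_le_exp_of_isBigO (g := fun p => ∑ i, (d i : ℝ) * |plusMinusCoords a p i|)
    hχ integrableExpSq_isingMeasure (continuous_finsetProd _ fun i _ =>
      (continuous_plusMinusCoords_apply a i).pow _).aestronglyMeasurable
    (IsBigO.fun_sum fun i _ => (isBigO_plusMinusCoords a i).abs_left.const_mul_left (d i : ℝ))
    fun p => ?_
  rw [abs_prod, Real.exp_sum]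
  exact prod_le_prod (fun i _ => abs_nonneg _) fun i _ =>
    (abs_pow _ _).trans_le (abs_pow_le_exp_mul_abs _ _)

lemma integral_monomial_nonneg [χ.IsNegInvariant] (ha : 0 < a)
    (hWells : χ (Set.Icc 0 a) ≤ χ (Set.Ici (a * Real.sqrt 2))) (hχ : IntegrableExpSq χ)
    (d : V ⊕ V →₀ ℕ) :
    0 ≤ ∫ p, ∏ i, plusMinusCoords a p i ^ d i
      ∂(Measure.pi fun _ : V => χ).prod (Measure.pi fun _ : V => isingMeasure) := by
  set f : V → ℝ → ℝ → ℝ := fun y s t => (s + a * t) ^ d (.inl y) * (s - a * t) ^ d (.inr y)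
  have hfactor : (fun p : (V → ℝ) × (V → ℝ) => ∏ i, plusMinusCoords a p i ^ d i)
      = fun p => ∏ y, f y (p.1 y) (p.2 y) := by
    ext p
    simp only [f, Fintype.prod_sum_type, plusMinusCoords, Sum.elim_inl, Sum.elim_inr,
      prod_mul_distrib]
  have hint := integrable_monomial (a := a) hχ d
  rw [hfactor] at hint ⊢
  rw [integral_prod_pi_prod f hint]
  exact prod_nonneg fun y _ => integral_integral_isingMeasure_nonneg ha hWells _ _

lemma integral_eval_nonneg [χ.IsNegInvariant] (ha : 0 < a)
    (hWells : χ (Set.Icc 0 a) ≤ χ (Set.Ici (a * Real.sqrt 2))) (hχ : IntegrableExpSq χ)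
    {P : MvPolynomial (V ⊕ V) ℝ} (hP : P ∈ nonnegCoeffs (V ⊕ V)) :
    0 ≤ ∫ p, eval (plusMinusCoords a p) P
      ∂(Measure.pi fun _ : V => χ).prod (Measure.pi fun _ : V => isingMeasure) := by
  simp_rw [eval_eq']
  rw [integral_finsetSum _ fun d _ => (integrable_monomial hχ d).const_mul _]
  refine sum_nonneg fun d _ => ?_
  rw [integral_const_mul]
  exact mul_nonneg (hP d) (integral_monomial_nonneg ha hWells hχ d)

end Monomials

section Exponential

variable {V : Type*} [Fintype V] {χ : Measure ℝ} [IsFiniteMeasure χ] {a : ℝ}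

lemma integrable_exp_abs_plusMinusCoords_add_abs_energy (hχ : IntegrableExpSq χ)
    (J : V → V → ℝ) (K : V → ℝ) (i : V ⊕ V) :
    Integrable (fun p => Real.exp (|plusMinusCoords a p i| + |energy J K a p.1 p.2|))
      ((Measure.pi fun _ : V => χ).prod (Measure.pi fun _ : V => isingMeasure)) :=
  integrable_of_abs_le_exp_of_isBigO hχ integrableExpSq_isingMeasure
    ((continuous_plusMinusCoords_apply a i).abs.add
      (continuous_energy J K a).abs).rexp.aestronglyMeasurable
    ((isBigO_plusMinusCoords a i).abs_left.add (isBigO_energy J K a).abs_left)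
    fun _ => (abs_of_pos (Real.exp_pos _)).le

lemma integrable_plusMinusCoords_mul_exp_energy (hχ : IntegrableExpSq χ)
    (J : V → V → ℝ) (K : V → ℝ) (i : V ⊕ V) :
    Integrable (fun p => plusMinusCoords a p i * Real.exp (energy J K a p.1 p.2))
      ((Measure.pi fun _ : V => χ).prod (Measure.pi fun _ : V => isingMeasure)) :=
  (integrable_exp_abs_plusMinusCoords_add_abs_energy hχ J K i).mono'
    ((continuous_plusMinusCoords_apply a i).mul (continuous_energy J K a).rexp).aestronglyMeasurable
    (ae_of_all _ fun _ => abs_mul_le_exp_abs_add_abs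
      ((abs_of_pos (Real.exp_pos _)).trans_le (Real.exp_le_exp.2 (le_abs_self _))))

lemma integral_plusMinusCoords_mul_exp_energy_nonneg [χ.IsNegInvariant] (ha : 0 < a)
    (hWells : χ (Set.Icc 0 a) ≤ χ (Set.Ici (a * Real.sqrt 2))) (hχ : IntegrableExpSq χ)
    {J : V → V → ℝ} {K : V → ℝ} (hJ : ∀ y z, 0 ≤ J y z) (hK : ∀ y, 0 ≤ K y) (i : V ⊕ V) :
    0 ≤ ∫ p, plusMinusCoords a p i * Real.exp (energy J K a p.1 p.2)
      ∂(Measure.pi fun _ : V => χ).prod (Measure.pi fun _ : V => isingMeasure) := by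
  set F := fun N p => eval (plusMinusCoords a p) (X i * expTrunc N (wellsPoly J K))
  have hF : ∀ N p, F N p
      = plusMinusCoords a p i * ∑ k ∈ range N, energy J K a p.1 p.2 ^ k / k ! := fun N p => by
    simp only [F, eval_mul, eval_X, eval_expTrunc, eval_wellsPoly]
  have hlim := tendsto_integral_of_dominated_convergence (F := F) _
    (fun N => ((continuous_eval _).comp (continuous_plusMinusCoords a)).aestronglyMeasurable)
    (integrable_exp_abs_plusMinusCoords_add_abs_energy hχ J K i)
    (fun N => ae_of_all _ fun p => by
      rw [hF]
      exact abs_mul_le_exp_abs_add_abs (abs_sum_range_pow_div_factorial_le _ N))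
    (ae_of_all _ fun p => by
      simp only [hF]
      exact (tendsto_sum_range_pow_div_factorial _).const_mul _)
  exact ge_of_tendsto' hlim fun N => integral_eval_nonneg ha hWells hχ
    (mul_mem (X_mem_nonnegCoeffs i) (expTrunc_mem (wellsPoly_mem hJ hK) N))

end Exponential

end

end Wells

open Wells

theorem wells_core_positivity_general
    {V : Type*} [Fintype V]
    (J : V → V → ℝ)
    (hJnn : ∀ y z, 0 ≤ J y z)
    (K : V → ℝ) (hK : ∀ y, 0 ≤ K y)
    (χ : Measure ℝ) [IsFiniteMeasure χ]
    (hχsym : χ.map (fun t => -t) = χ)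
    (hχexp : ∀ ϑ : ℝ, 0 < ϑ → Integrable (fun t => Real.exp (ϑ * t ^ 2)) χ)
    (a : ℝ) (ha : 0 < a)
    (hWells : χ (Set.Icc 0 a) ≤ χ (Set.Ici (a * Real.sqrt 2)))
    (x : V) :
    0 ≤ ∫ σ : V → ℝ, ∫ τ : V → ℝ,
        (σ x - a * τ x) *
          Real.exp ((1 / 2) * ∑ y, ∑ z, J y z * (σ y * σ z + a ^ 2 * τ y * τ z)
            + ∑ y, K y * (σ y + a * τ y))
        ∂(Measure.pi fun _ : V =>
            ((2 : ℝ≥0∞)⁻¹ • (Measure.dirac (-1 : ℝ) + Measure.dirac (1 : ℝ))))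
        ∂(Measure.pi fun _ : V => χ) := by
  have : χ.IsNegInvariant := ⟨hχsym⟩
  change 0 ≤ ∫ σ, ∫ τ, plusMinusCoords a (σ, τ) (.inr x) * Real.exp (energy J K a σ τ)
    ∂(Measure.pi fun _ : V => isingMeasure) ∂(Measure.pi fun _ : V => χ)
  rw [integral_integral (integrable_plusMinusCoords_mul_exp_energy hχexp J K (.inr x))]
  exact integral_plusMinusCoords_mul_exp_energy_nonneg ha hWells hχexp hJnn hK (.inr x)

/-- Core positivity step in the proof of the Wells inequality. -/
theorem wells_core_positivity
    {V : Type*} [Fintype V] [Nonempty V]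
    (J : V → V → ℝ) (hJsym : ∀ y z, J y z = J z y)
    (hJnn : ∀ y z, 0 ≤ J y z) (hJdiag : ∀ y, J y y = 0)
    (K : V → ℝ) (hK : ∀ y, 0 ≤ K y)
    (χ : Measure ℝ) [IsFiniteMeasure χ]
    (hχsym : χ.map (fun t => -t) = χ)
    (hχexp : ∀ ϑ : ℝ, 0 < ϑ → Integrable (fun t => Real.exp (ϑ * t ^ 2)) χ)
    (a : ℝ) (ha : 0 < a)
    (hWells : χ (Set.Icc 0 a) ≤ χ (Set.Ici (a * Real.sqrt 2)))
    (x : V) :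
    0 ≤ ∫ σ : V → ℝ, ∫ τ : V → ℝ,
        (σ x - a * τ x) *
          Real.exp ((1 / 2) * ∑ y, ∑ z, J y z * (σ y * σ z + a ^ 2 * τ y * τ z)
            + ∑ y, K y * (σ y + a * τ y))
        ∂(Measure.pi fun _ : V =>
            ((2 : ℝ≥0∞)⁻¹ • (Measure.dirac (-1 : ℝ) + Measure.dirac (1 : ℝ))))
        ∂(Measure.pi fun _ : V => χ) :=
  wells_core_positivity_general J hJnn K hK χ hχsym hχexp a ha hWells x
end

section
/- Positivity of the reduced one-site integral under the Wells condition. Let χ be a finite Borel measure on ℝ, let a > 0 and l, p ∈ ℕ, and set φ(σ) := (σ + a)^{2p} + (σ − a)^{2p}. Assume the function σ ↦ (σ² − a²)^{2l+1} φ(σ) is χ-integrable on [0, ∞) and that χ satisfies the Wells condition χ([a√2, ∞)) ≥ χ([0, a]). Then ∫_{[0,∞)} (σ² − a²)^{2l+1} φ(σ) χ(dσ) ≥ 0. -/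
open MeasureTheory

noncomputable def phi (a : ℝ) (p : ℕ) (σ : ℝ) : ℝ :=
  (σ + a) ^ (2 * p) + (σ - a) ^ (2 * p)

/-!
Since `f x = x ^ (2p)` is convex and even, `φ(σ) = f(a + σ) + f(a - σ)` is nondecreasing on
`[0, ∞)`.
Hence, with `M = (a²)^(2l+1) φ(a)`, the integrand is `≥ -M` on `[0, a]`, `≥ 0` on `(a, ∞)` and
`≥ M` on `[a√2, ∞)`, so the integral is at least `M (χ[a√2, ∞) - χ[0, a]) ≥ 0`.
-/

open Set

theorem ConvexOn.monotoneOn_map_add_add_map_sub {𝕜 : Type*} [Field 𝕜] [LinearOrder 𝕜]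
    [IsStrictOrderedRing 𝕜] {f : 𝕜 → 𝕜} (hf : ConvexOn 𝕜 univ f) (c : 𝕜) :
    MonotoneOn (fun x => f (c + x) + f (c - x)) (Ici 0) := by
  intro s (hs : 0 ≤ s) t _ hst
  obtain rfl | ht := (hs.trans hst).eq_or_lt
  · rw [le_antisymm hst hs]
  -- `c ± s` are the convex combinations of `c + t` and `c - t` with swapped weights `w, 1 - w`.
  set w := (t + s) / (2 * t)
  have hw0 : 0 ≤ w := div_nonneg (by linarith) (by linarith)
  have hw1 : 0 ≤ 1 - w := by
    rw [sub_nonneg, div_le_one (by positivity)]; linarith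
  have hplus : c + s = w * (c + t) + (1 - w) * (c - t) := by
    simp only [w]; field_simp; ring
  have hminus : c - s = (1 - w) * (c + t) + w * (c - t) := by
    simp only [w]; field_simp; ring
  have h₁ := hf.2 (mem_univ (c + t)) (mem_univ (c - t)) hw0 hw1 (add_sub_cancel w 1)
  have h₂ := hf.2 (mem_univ (c + t)) (mem_univ (c - t)) hw1 hw0 (sub_add_cancel 1 w)
  simp only [smul_eq_mul] at h₁ h₂
  simp only [hplus, hminus]
  linarith

lemma phi_nonneg (a : ℝ) (p : ℕ) (σ : ℝ) : 0 ≤ phi a p σ :=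
  add_nonneg ((even_two_mul p).pow_nonneg _) ((even_two_mul p).pow_nonneg _)

lemma phi_monotoneOn (a : ℝ) (p : ℕ) : MonotoneOn (phi a p) (Ici 0) := by
  have h : phi a p = fun σ => (a + σ) ^ (2 * p) + (a - σ) ^ (2 * p) := by
    funext σ
    rw [phi, add_comm σ, ← neg_sub a σ, (even_two_mul p).neg_pow]
  rw [h]
  exact (even_two_mul p).convexOn_pow.monotoneOn_map_add_add_map_sub a

theorem setIntegral_union_nonneg_of_balanced {α : Type*} [MeasurableSpace α] {μ : Measure α}
    [IsFiniteMeasure μ] {g : α → ℝ} {s t u : Set α} {M : ℝ} (hM : 0 ≤ M)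
    (hs : MeasurableSet s) (ht : MeasurableSet t) (hu : MeasurableSet u) (hst : Disjoint s t)
    (hut : u ⊆ t) (hg : IntegrableOn g (s ∪ t) μ) (hgs : ∀ x ∈ s, -M ≤ g x)
    (hgt : ∀ x ∈ t, 0 ≤ g x) (hgu : ∀ x ∈ u, M ≤ g x) (hμ : μ s ≤ μ u) :
    0 ≤ ∫ x in s ∪ t, g x ∂μ := by
  have hgt' : IntegrableOn g t μ := hg.right_of_union
  have hμ' : μ.real s ≤ μ.real u := ENNReal.toReal_mono (measure_ne_top μ u) hμ
  rw [setIntegral_union hst ht hg.left_of_union hgt']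
  calc 0 ≤ -M * μ.real s + M * μ.real u := by nlinarith
    _ ≤ (∫ x in s, g x ∂μ) + ∫ x in u, g x ∂μ :=
      add_le_add (setIntegral_ge_of_const_le_real hs (measure_ne_top μ s) hgs hg.left_of_union)
        (setIntegral_ge_of_const_le_real hu (measure_ne_top μ u) hgu (hgt'.mono_set hut))
    _ ≤ (∫ x in s, g x ∂μ) + ∫ x in t, g x ∂μ :=
      add_le_add_right (setIntegral_mono_set hgt' ((ae_restrict_iff' ht).mpr (.of_forall hgt))
        hut.eventuallyLE) _

variable {a σ : ℝ} {n : ℕ}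

lemma neg_le_pow_sq_sub_sq_mul_phi (p : ℕ) (hn : Odd n) (hσ : σ ∈ Icc 0 a) :
    -((a ^ 2) ^ n * phi a p a) ≤ (σ ^ 2 - a ^ 2) ^ n * phi a p σ := by
  obtain ⟨hσ0, hσa⟩ := hσ
  rw [← neg_sub, hn.neg_pow, neg_mul, neg_le_neg_iff]
  exact mul_le_mul (pow_le_pow_left₀ (by nlinarith) (by nlinarith) n)
    (phi_monotoneOn a p hσ0 (hσ0.trans hσa) hσa) (phi_nonneg a p σ) (by positivity)

lemma pow_sq_sub_sq_mul_phi_nonneg (p : ℕ) (ha : 0 ≤ a) (hσ : a ≤ σ) :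
    0 ≤ (σ ^ 2 - a ^ 2) ^ n * phi a p σ :=
  mul_nonneg (pow_nonneg (by nlinarith) n) (phi_nonneg a p σ)

lemma le_pow_sq_sub_sq_mul_phi (p : ℕ) (ha : 0 ≤ a) (hσ : a * √2 ≤ σ) :
    (a ^ 2) ^ n * phi a p a ≤ (σ ^ 2 - a ^ 2) ^ n * phi a p σ := by
  have haσ : a ≤ σ := (le_mul_of_one_le_right ha Real.one_lt_sqrt_two.le).trans hσ
  have hσ2 : 2 * a ^ 2 ≤ σ ^ 2 :=
    calc 2 * a ^ 2 = (a * √2) ^ 2 := by rw [mul_pow, Real.sq_sqrt zero_le_two, mul_comm]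
      _ ≤ σ ^ 2 := pow_le_pow_left₀ (by positivity) hσ 2
  exact mul_le_mul (pow_le_pow_left₀ (by positivity) (by linarith) n)
    (phi_monotoneOn a p ha (ha.trans haσ) haσ) (phi_nonneg a p a)
    (pow_nonneg (by nlinarith) n)

/-- Positivity of the reduced one-site integral under the Wells condition. -/
theorem reduced_one_site_positivity
    (χ : Measure ℝ) [IsFiniteMeasure χ]
    (a : ℝ) (ha : 0 < a) (l p : ℕ)
    (hint : IntegrableOn
      (fun σ => (σ ^ 2 - a ^ 2) ^ (2 * l + 1) * phi a p σ) (Set.Ici 0) χ)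
    (hWells : χ (Set.Icc 0 a) ≤ χ (Set.Ici (a * Real.sqrt 2))) :
    0 ≤ ∫ σ in Set.Ici (0 : ℝ), (σ ^ 2 - a ^ 2) ^ (2 * l + 1) * phi a p σ ∂χ := by
  rw [← Icc_union_Ioi_eq_Ici ha.le] at hint ⊢
  have ha_lt : a < a * √2 := lt_mul_of_one_lt_right ha Real.one_lt_sqrt_two
  exact setIntegral_union_nonneg_of_balanced (u := Ici (a * √2))
    (mul_nonneg (by positivity) (phi_nonneg a p a)) measurableSet_Icc measurableSet_Ioi
    measurableSet_Ici ((Iic_disjoint_Ioi le_rfl).mono_left Icc_subset_Iic_self)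
    (fun _ hσ => ha_lt.trans_le hσ) hint
    (fun _ hσ => neg_le_pow_sq_sub_sq_mul_phi p (odd_two_mul_add_one l) hσ)
    (fun _ hσ => pow_sq_sub_sq_mul_phi_nonneg p ha.le (le_of_lt hσ))
    (fun _ hσ => le_pow_sq_sub_sq_mul_phi p ha.le hσ) hWells
end
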